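/- arXiv:2202.08863 — 5 statements merged into one kernel-verified Lean document; each statement's English description precedes it below -/
import Mathlib

section
/- Let d, m ≥ 1 and let c be the least positive integer satisfying (c² − 3c + 2)/2 ≥ m. Let (H₁,…,H_m) and (H₁′,…,H_m′) be tuples of Hermitian d×d complex matrices. If Tr(H_{w(1)} ⋯ H_{w(ℓ)}) = Tr(H′_{w(1)} ⋯ H′_{w(ℓ)}) for every ℓ with 1 ≤ ℓ ≤ ⌈((cd)² + 2)/3⌉ and every function w : {1,…,ℓ} → {1,…,m}, then (H₁,…,H_m) and (H₁′,…,H_m′) are simultaneously unitarily similar. -/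
/-!
Pair the two tuples in the algebra `M_d(ℂ) × M_d(ℂ)`, of dimension `2 d²`. The span of the words of
length at most `k` in the pairs `(H j, H' j)` grows strictly until it stabilises, so the words of
length at most `2 d²` span the algebra they generate. Since `c ≥ 3`, the bound
`⌈((c d)² + 2) / 3⌉` is at least `2 d²`, so the two trace functionals agree on this algebra, which
is star-closed because the `H j` are Hermitian.

That this forces simultaneous unitary similarity is Specht's criterion. Let `B` be the block
diagonal copy of the algebra acting on `ℂ^d ⊕ ℂ^d`; its commutant contains the two block
projections `P` and `Q`, and `tr (P b) = tr (Q b)` for `b ∈ B`. By the double commutant theorem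
(Jacobson density for the semisimple `B`-module `ℂ^{2d}`) there is `c` in the commutant with
`Q c P ≠ 0` as long as `P ≠ 0`. Normalising `Q c P` on an eigenspace of its absolute square gives a
partial isometry in the commutant from a subprojection of `P` onto a subprojection of `Q`, and
induction on the rank makes `P` and `Q` Murray–von Neumann equivalent in the commutant. The
off-diagonal block of the implementing partial isometry is a unitary intertwining `H j` and `H' j`.
-/

open Matrix

/-- A word trace: the trace of `H_{w 0} * H_{w 1} * ⋯ * H_{w (ℓ-1)}`. -/
noncomputable def wordTrace {d m : ℕ} (H : Fin m → Matrix (Fin d) (Fin d) ℂ)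
    {ℓ : ℕ} (w : Fin ℓ → Fin m) : ℂ :=
  ((List.ofFn fun i => H (w i)).prod).trace

/-- Two tuples of `d × d` matrices are simultaneously unitarily similar if a single
unitary `U` conjugates every member of the first tuple to the corresponding member
of the second. -/
def SimUnitarilySimilar {d m : ℕ} (H H' : Fin m → Matrix (Fin d) (Fin d) ℂ) : Prop :=
  ∃ U ∈ Matrix.unitaryGroup (Fin d) ℂ, ∀ j, H' j = U * H j * Uᴴ

open Module

theorem Submodule.le_apply_finrank_of_monotone {K V : Type*} [Field K] [AddCommGroup V]
    [Module K V] [FiniteDimensional K V] {S : ℕ → Submodule K V} (hS : Monotone S)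
    (hstep : ∀ k, S k = S (k + 1) → S (k + 1) = S (k + 2)) (n : ℕ) :
    S n ≤ S (finrank K V) := by
  obtain ⟨k, hk, hkS⟩ : ∃ k ≤ finrank K V, S k = S (k + 1) := by
    by_contra! h
    have hgrow : ∀ k ≤ finrank K V + 1, k ≤ finrank K (S k) := by
      intro k
      induction k with
      | zero => simp
      | succ k ih =>
        intro hk
        have := Submodule.finrank_lt_finrank_of_lt
          ((hS (by omega : k ≤ k + 1)).lt_of_ne (h k (by omega)))
        have := ih (by omega)
        omega
    have := hgrow _ le_rfl
    have := Submodule.finrank_le (S (finrank K V + 1))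
    omega
  have hsucc (t : ℕ) : S (k + t) = S (k + t + 1) := by
    induction t with
    | zero => exact hkS
    | succ t ih => exact hstep _ ih
  have hconst (t : ℕ) : S (k + t) = S k := by
    induction t with
    | zero => rfl
    | succ t ih => rw [← add_assoc, ← hsucc, ih]
  calc S n ≤ S (k + n) := hS (by omega)
    _ = S k := hconst n
    _ ≤ S (finrank K V) := hS hk

theorem Algebra.adjoin_range_le_span_prod_map {K A ι : Type*} [Field K] [Ring A] [Algebra K A]
    [FiniteDimensional K A] (G : ι → A) :
    Subalgebra.toSubmodule (Algebra.adjoin K (Set.range G)) ≤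
      Submodule.span K {x | ∃ L : List ι, L.length ≤ finrank K A ∧ (L.map G).prod = x} := by
  set S : ℕ → Submodule K A :=
    fun k => Submodule.span K {x | ∃ L : List ι, L.length ≤ k ∧ (L.map G).prod = x}
  have hS : Monotone S := fun a b hab =>
    Submodule.span_mono fun x ⟨L, hL, hx⟩ => ⟨L, hL.trans hab, hx⟩
  have hmul (k : ℕ) (j : ι) : S k ≤ (S (k + 1)).comap (LinearMap.mulLeft K (G j)) := by
    refine Submodule.span_le.mpr ?_
    rintro _ ⟨L, hL, rfl⟩
    exact Submodule.subset_span ⟨j :: L, by simpa using hL, by simp⟩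
  have hstep (k : ℕ) (hk : S k = S (k + 1)) : S (k + 1) = S (k + 2) := by
    refine le_antisymm (hS (by omega)) (Submodule.span_le.mpr ?_)
    rintro _ ⟨L, hL, rfl⟩
    cases L with
    | nil => exact Submodule.subset_span ⟨[], by simp, rfl⟩
    | cons j L =>
      rw [List.map_cons, List.prod_cons]
      exact hmul k j (hk ▸ Submodule.subset_span ⟨L, by simpa using hL, rfl⟩)
  rw [Algebra.adjoin_eq_span, Submodule.span_le, ← FreeMonoid.mrange_lift]
  rintro _ ⟨w, rfl⟩
  rw [FreeMonoid.lift_apply]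
  exact Submodule.le_apply_finrank_of_monotone hS hstep _
    (Submodule.subset_span ⟨w.toList, le_rfl, rfl⟩)

theorem StarAlgebra.adjoin_toSubalgebra_of_isSelfAdjoint {R A : Type*} [CommSemiring R]
    [StarRing R] [Semiring A] [Algebra R A] [StarRing A] [StarModule R A] {s : Set A}
    (hs : ∀ x ∈ s, IsSelfAdjoint x) :
    (StarAlgebra.adjoin R s).toSubalgebra = Algebra.adjoin R s := by
  have hstar : star s = s := by
    ext x
    refine ⟨fun hx => ?_, fun hx => ?_⟩
    · rw [← star_star x, (hs _ hx).star_eq]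
      exact hx
    · rw [Set.mem_star, (hs x hx).star_eq]
      exact hx
  rw [StarAlgebra.adjoin_toSubalgebra, hstar, Set.union_self]

section CStarRing

variable {A : Type*} [NonUnitalNormedRing A] [StarRing A] [CStarRing A]

theorem mul_eq_self_of_star_mul_self_eq {w p : A} (hp : IsStarProjection p)
    (hw : star w * w = p) : w * p = w := by
  have h : star (w - w * p) * (w - w * p) = 0 := by
    calc star (w - w * p) * (w - w * p)
        = star w * w - star w * w * p - p * (star w * w) + p * (star w * w) * p := by
          rw [star_sub, star_mul, hp.isSelfAdjoint.star_eq]; noncomm_ring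
      _ = 0 := by simp [hw, hp.isIdempotentElem.eq]
  exact (sub_eq_zero.mp ((CStarRing.star_mul_self_eq_zero_iff _).mp h)).symm

theorem mul_eq_self_of_mul_star_self_eq {w q : A} (hq : IsStarProjection q)
    (hw : w * star w = q) : q * w = w := by
  have h := mul_eq_self_of_star_mul_self_eq hq (by rwa [star_star])
  simpa [hq.isSelfAdjoint.star_eq] using congr(star $h)

theorem IsStarProjection.mul_star_self {w : A} (h : IsStarProjection (star w * w)) :
    IsStarProjection (w * star w) where
  isSelfAdjoint := .mul_star_self w
  isIdempotentElem := by
    rw [IsIdempotentElem, ← mul_assoc, mul_assoc w, mul_eq_self_of_star_mul_self_eq h rfl]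

end CStarRing

namespace StarSubalgebra

def IsMurrayVonNeumannEquiv {R A : Type*} [CommSemiring R] [StarRing R] [Semiring A] [StarRing A]
    [Algebra R A] [StarModule R A] (S : StarSubalgebra R A) (p q : A) : Prop :=
  ∃ w ∈ S, star w * w = p ∧ w * star w = q

variable {R A : Type*} [CommSemiring R] [StarRing R] [NormedRing A] [StarRing A] [CStarRing A]
  [Algebra R A] [StarModule R A] {S : StarSubalgebra R A} {p q p' q' : A}

theorem IsMurrayVonNeumannEquiv.add (h : S.IsMurrayVonNeumannEquiv p q)
    (h' : S.IsMurrayVonNeumannEquiv p' q') (hp : IsStarProjection p) (hq : IsStarProjection q)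
    (hp' : IsStarProjection p') (hq' : IsStarProjection q') (hpp' : p * p' = 0)
    (hqq' : q * q' = 0) :
    S.IsMurrayVonNeumannEquiv (p + p') (q + q') := by
  obtain ⟨w, hwS, hwp, hwq⟩ := h
  obtain ⟨w', hwS', hwp', hwq'⟩ := h'
  have hw_p : w * p = w := mul_eq_self_of_star_mul_self_eq hp hwp
  have hq_w : q * w = w := mul_eq_self_of_mul_star_self_eq hq hwq
  have hp'_w' : p' * star w' = star w' := by
    simpa [hp'.isSelfAdjoint.star_eq] using
      congr(star $(mul_eq_self_of_star_mul_self_eq hp' hwp'))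
  have hq'_w' : q' * w' = w' := mul_eq_self_of_mul_star_self_eq hq' hwq'
  have h₁ : star w * w' = 0 := by
    rw [← hq_w, ← hq'_w', star_mul, hq.isSelfAdjoint.star_eq, mul_assoc, ← mul_assoc q, hqq']
    simp
  have h₂ : w * star w' = 0 := by
    rw [← hw_p, ← hp'_w', mul_assoc, ← mul_assoc p, hpp']
    simp
  refine ⟨w + w', add_mem hwS hwS', ?_, ?_⟩
  · have : star w' * w = 0 := by simpa using congr(star $h₁)
    simp [add_mul, mul_add, hwp, hwp', h₁, this]
  · have : w' * star w = 0 := by simpa using congr(star $h₂)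
    simp [add_mul, mul_add, hwq, hwq', h₂, this]

end StarSubalgebra

section InnerProductSpace

variable {E : Type*} [NormedAddCommGroup E] [InnerProductSpace ℂ E] [FiniteDimensional ℂ E]

theorem Submodule.commute_starProjection {U : Submodule ℂ E} {a : E →L[ℂ] E}
    (h : U ∈ End.invtSubmodule a) (h' : U ∈ End.invtSubmodule (star a : E →L[ℂ] E)) :
    Commute U.starProjection a := by
  have hker : Uᗮ ∈ End.invtSubmodule (a : E →ₗ[ℂ] E) :=
    ContinuousLinearMap.orthogonal_mem_invtSubmodule
      (by rwa [← ContinuousLinearMap.star_eq_adjoint])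
  have := (LinearMap.IsIdempotentElem.commute_iff (T := a)
    (ContinuousLinearMap.IsIdempotentElem.toLinearMap U.isIdempotentElem_starProjection)).mpr
    ⟨by rwa [Submodule.range_starProjection], by rwa [Submodule.ker_starProjection]⟩
  exact ContinuousLinearMap.coe_injective (by simpa [Commute, SemiconjBy] using this)

namespace ContinuousLinearMap

theorem finrank_range_eq_zero_iff {T : E →L[ℂ] E} :
    finrank ℂ (LinearMap.range (T : E →ₗ[ℂ] E)) = 0 ↔ T = 0 := by
  rw [Submodule.finrank_eq_zero, LinearMap.range_eq_bot, ← toLinearMap_zero, coe_inj]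

theorem trace_eq_finrank_range_of_isIdempotentElem {P : E →L[ℂ] E} (hP : IsIdempotentElem P) :
    LinearMap.trace ℂ E P = finrank ℂ (LinearMap.range (P : E →ₗ[ℂ] E)) :=
  (LinearMap.IsIdempotentElem.isProj_range _ (IsIdempotentElem.toLinearMap hP)).trace

theorem trace_eq_zero_iff_of_isIdempotentElem {P : E →L[ℂ] E} (hP : IsIdempotentElem P) :
    LinearMap.trace ℂ E P = 0 ↔ P = 0 := by
  rw [trace_eq_finrank_range_of_isIdempotentElem hP, Nat.cast_eq_zero, finrank_range_eq_zero_iff]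

theorem finrank_range_sub_add_finrank_range {P p : E →L[ℂ] E} (hP : IsStarProjection P)
    (hp : IsStarProjection p) (hPp : P * p = p) :
    finrank ℂ (LinearMap.range ((P - p : E →L[ℂ] E) : E →ₗ[ℂ] E)) +
      finrank ℂ (LinearMap.range (p : E →ₗ[ℂ] E)) =
        finrank ℂ (LinearMap.range (P : E →ₗ[ℂ] E)) := by
  have h := map_add (LinearMap.trace ℂ E) ((P - p : E →L[ℂ] E) : E →ₗ[ℂ] E) p
  rw [← toLinearMap_add, sub_add_cancel,
    trace_eq_finrank_range_of_isIdempotentElem hP.isIdempotentElem,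
    trace_eq_finrank_range_of_isIdempotentElem (hp.sub_of_mul_eq_right hP hPp).isIdempotentElem,
    trace_eq_finrank_range_of_isIdempotentElem hp.isIdempotentElem] at h
  exact_mod_cast h.symm

theorem exists_pos_hasEigenvalue_star_mul_self {T : E →L[ℂ] E} (hT : T ≠ 0) :
    ∃ σ : ℝ, 0 < σ ∧ End.HasEigenvalue ((star T * T : E →L[ℂ] E) : E →ₗ[ℂ] E) ((σ : ℂ) ^ 2) := by
  have hrange : 0 < finrank ℂ (LinearMap.range (T : E →ₗ[ℂ] E)) :=
    Nat.pos_of_ne_zero (finrank_range_eq_zero_iff.not.mpr hT)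
  refine ⟨(T : E →ₗ[ℂ] E).singularValues 0,
    (LinearMap.singularValues_pos_iff_lt_finrank_range _).mpr hrange, ?_⟩
  rw [star_eq_adjoint, toLinearMap_mul, ← adjoint_toLinearMap]
  exact (T : E →ₗ[ℂ] E).hasEigenvalue_adjoint_comp_self_sq_singularValues
    (hrange.trans_le (Submodule.finrank_le _))

end ContinuousLinearMap

namespace StarSubalgebra

variable (B : StarSubalgebra ℂ (E →L[ℂ] E))

instance : IsScalarTower ℂ B E where
  smul_assoc _ _ _ := rfl

instance isSemisimpleModule : IsSemisimpleModule B E where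
  exists_isCompl N := by
    let N' : Submodule B E :=
      { carrier := (N.restrictScalars ℂ)ᗮ
        add_mem' := Submodule.add_mem _
        zero_mem' := Submodule.zero_mem _
        smul_mem' := fun b v hv => by
          rw [SetLike.mem_coe, Submodule.mem_orthogonal] at hv ⊢
          intro w hw
          have h := hv ((star b : B) • w) (N.smul_mem _ hw)
          rwa [show ((star b : B) • w) = ContinuousLinearMap.adjoint (b : E →L[ℂ] E) w from rfl,
            ContinuousLinearMap.adjoint_inner_left] at h }
    refine ⟨N', Submodule.disjoint_def.mpr fun v hv hv' => inner_self_eq_zero.mp (hv' v hv), ?_⟩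
    rw [codisjoint_iff, Submodule.eq_top_iff']
    intro v
    exact Submodule.mem_sup.mpr ⟨_, (N.restrictScalars ℂ).starProjection_apply_mem v, _,
      Submodule.sub_starProjection_mem_orthogonal v, add_sub_cancel _ _⟩

theorem mem_of_mem_centralizer_centralizer {T : E →L[ℂ] E}
    (hT : T ∈ centralizer ℂ (centralizer ℂ (B : Set (E →L[ℂ] E)) : Set (E →L[ℂ] E))) :
    T ∈ B := by
  have : Module.Finite (End B E) E := .of_restrictScalars_finite ℂ _ E
  let f : End (End B E) E :=
    { toFun := T
      map_add' := T.map_add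
      map_smul' := fun g v => by
        let g' : E →L[ℂ] E := LinearMap.toContinuousLinearMap (g.restrictScalars ℂ)
        have hg' : g' ∈ centralizer ℂ (B : Set (E →L[ℂ] E)) := by
          rw [mem_centralizer_iff]
          intro b hb
          constructor <;> ext w
          · exact (g.map_smul ⟨b, hb⟩ w).symm
          · exact (g.map_smul ⟨star b, star_mem hb⟩ w).symm
        exact congr($(((mem_centralizer_iff ℂ).mp hT g' hg').1) v).symm }
  obtain ⟨r, hr⟩ := Module.Finite.toModuleEnd_moduleEnd_surjective f
  have : (r : E →L[ℂ] E) = T := ContinuousLinearMap.ext fun v => congr($hr v)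
  exact this ▸ r.2

theorem starProjection_mem_centralizer {U : Submodule ℂ E}
    (hU : ∀ a ∈ B, U ∈ End.invtSubmodule a) :
    U.starProjection ∈ centralizer ℂ (B : Set (E →L[ℂ] E)) := by
  rw [mem_centralizer_iff]
  refine fun a ha => ⟨(U.commute_starProjection (hU a ha) (hU _ (star_mem ha))).symm.eq, ?_⟩
  exact (U.commute_starProjection (hU _ (star_mem ha)) (by rw [star_star]; exact hU a ha)).symm.eq

theorem starProjection_eigenspace_mem_centralizer {S : E →L[ℂ] E}
    (hS : S ∈ centralizer ℂ (B : Set (E →L[ℂ] E))) (μ : ℂ) :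
    (End.eigenspace (S : E →ₗ[ℂ] E) μ).starProjection ∈ centralizer ℂ (B : Set (E →L[ℂ] E)) := by
  refine B.starProjection_mem_centralizer fun b hb => (End.mem_invtSubmodule _).mpr fun v hv => ?_
  have hbS : Commute (S : E →ₗ[ℂ] E) b := by
    simpa [Commute, SemiconjBy] using congr(($(((mem_centralizer_iff ℂ).mp hS b hb).1) :
      E →ₗ[ℂ] E)).symm
  exact End.mapsTo_genEigenspace_of_comm hbS μ 1 hv

theorem exists_mul_mul_ne_zero_of_trace_eq {P Q : E →L[ℂ] E} (hP : IsStarProjection P)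
    (hP0 : P ≠ 0)
    (htr : ∀ b ∈ B, LinearMap.trace ℂ E ↑(P * b) = LinearMap.trace ℂ E ↑(Q * b)) :
    ∃ c ∈ centralizer ℂ (B : Set (E →L[ℂ] E)), Q * c * P ≠ 0 := by
  by_contra! h
  set C := centralizer ℂ (B : Set (E →L[ℂ] E))
  -- The projection `R` onto the `C`-invariant subspace `C (P E)` lies in `B` by the double
  -- commutant theorem; it fixes `P` and is killed by `Q`, against `tr (P R) = tr (Q R)`.
  let U : Submodule ℂ E := Submodule.span ℂ {x | ∃ c ∈ C, ∃ v, (c * P) v = x}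
  set R := U.starProjection
  have hU (a : E →L[ℂ] E) (ha : a ∈ C) : U ∈ End.invtSubmodule a := by
    rw [End.mem_invtSubmodule, Submodule.span_le]
    rintro _ ⟨c, hc, v, rfl⟩
    exact Submodule.subset_span ⟨a * c, mul_mem ha hc, v, rfl⟩
  have hRB : R ∈ B := mem_of_mem_centralizer_centralizer B (C.starProjection_mem_centralizer hU)
  have hRP : R * P = P := by
    ext v
    exact Submodule.starProjection_eq_self_iff.mpr (Submodule.subset_span ⟨1, one_mem C, v, rfl⟩)
  have hQR : Q * R = 0 := by
    have hQU : U ≤ LinearMap.ker (Q : E →ₗ[ℂ] E) := by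
      rw [Submodule.span_le]
      rintro _ ⟨c, hc, v, rfl⟩
      simpa [← mul_assoc] using congr($(h c hc) v)
    ext v
    exact hQU (U.starProjection_apply_mem v)
  have := htr _ hRB
  rw [hQR, ContinuousLinearMap.toLinearMap_mul, LinearMap.trace_mul_comm,
    ← ContinuousLinearMap.toLinearMap_mul, hRP] at this
  exact hP0 ((ContinuousLinearMap.trace_eq_zero_iff_of_isIdempotentElem hP.isIdempotentElem).mp
    (by simpa using this))

theorem exists_isStarProjection_star_mul_self {P Q T : E →L[ℂ] E}
    (hTC : T ∈ centralizer ℂ (B : Set (E →L[ℂ] E))) (hT0 : T ≠ 0) (hP : IsSelfAdjoint P)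
    (hTP : T * P = T) (hQT : Q * T = T) :
    ∃ u ∈ centralizer ℂ (B : Set (E →L[ℂ] E)), star u * u ≠ 0 ∧
      IsStarProjection (star u * u) ∧ P * (star u * u) = star u * u ∧ Q * u = u := by
  obtain ⟨σ, hσ, hσT⟩ := ContinuousLinearMap.exists_pos_hasEigenvalue_star_mul_self hT0
  set U := End.eigenspace ((star T * T : E →L[ℂ] E) : E →ₗ[ℂ] E) ((σ : ℂ) ^ 2)
  set p := U.starProjection
  have hσ1 : (σ : ℂ) ≠ 0 := by exact_mod_cast hσ.ne'
  have hσ0 : (σ : ℂ) ^ 2 ≠ 0 := pow_ne_zero 2 hσ1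
  have hSp : star T * T * p = (σ : ℂ) ^ 2 • p := by
    ext w
    exact End.mem_eigenspace_iff.mp (U.starProjection_apply_mem w)
  have hPp : P * p = p := by
    have hPT : P * star T = star T := by simpa [hP.star_eq] using congr(star $hTP)
    calc P * p = ((σ : ℂ) ^ 2)⁻¹ • (P * star T * T * p) := by
          rw [mul_assoc, mul_assoc, ← mul_assoc (star T), hSp, mul_smul_comm, smul_smul,
            inv_mul_cancel₀ hσ0, one_smul]
      _ = p := by rw [hPT, hSp, smul_smul, inv_mul_cancel₀ hσ0, one_smul]
  have hp0 : p ≠ 0 := by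
    refine fun h => End.hasEigenvalue_iff.mp hσT ((Submodule.eq_bot_iff U).mpr fun v hv => ?_)
    rw [← Submodule.starProjection_eq_self_iff.mpr hv]
    exact congr($h v)
  have hpC : p ∈ centralizer ℂ (B : Set (E →L[ℂ] E)) :=
    B.starProjection_eigenspace_mem_centralizer (mul_mem (star_mem hTC) hTC) _
  refine ⟨((σ : ℂ)⁻¹) • (T * p), Subalgebra.smul_mem _ (mul_mem hTC hpC) _, ?_⟩
  have hup : star (((σ : ℂ)⁻¹) • (T * p)) * (((σ : ℂ)⁻¹) • (T * p)) = p := by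
    rw [star_smul, star_mul, (isStarProjection_starProjection (U := U)).isSelfAdjoint.star_eq,
      smul_mul_smul, mul_assoc, ← mul_assoc (star T), ← mul_assoc, mul_assoc p, hSp,
      mul_smul_comm, (isStarProjection_starProjection (U := U)).isIdempotentElem.eq, smul_smul]
    convert one_smul ℂ p
    rw [star_inv₀, Complex.star_def, Complex.conj_ofReal]
    field_simp
  rw [hup]
  exact ⟨hp0, isStarProjection_starProjection, hPp, by rw [mul_smul_comm, ← mul_assoc, hQT]⟩

theorem isMurrayVonNeumannEquiv_of_trace_eq {P Q : E →L[ℂ] E}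
    (hPC : P ∈ centralizer ℂ (B : Set (E →L[ℂ] E)))
    (hQC : Q ∈ centralizer ℂ (B : Set (E →L[ℂ] E))) (hP : IsStarProjection P)
    (hQ : IsStarProjection Q)
    (htr : ∀ b ∈ B, LinearMap.trace ℂ E ↑(P * b) = LinearMap.trace ℂ E ↑(Q * b)) :
    (centralizer ℂ (B : Set (E →L[ℂ] E))).IsMurrayVonNeumannEquiv P Q := by
  set C := centralizer ℂ (B : Set (E →L[ℂ] E))
  induction hn : finrank ℂ (LinearMap.range (P : E →ₗ[ℂ] E)) using Nat.strong_induction_on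
    generalizing P Q with
  | _ n ih =>
  rcases eq_or_ne P 0 with rfl | hP0
  · have hQ0 : Q = 0 := by
      rw [← ContinuousLinearMap.trace_eq_zero_iff_of_isIdempotentElem hQ.isIdempotentElem]
      simpa using (htr 1 (one_mem B)).symm
    exact ⟨0, zero_mem C, by simp, by simp [hQ0]⟩
  obtain ⟨c, hcC, hc⟩ := exists_mul_mul_ne_zero_of_trace_eq B hP hP0 htr
  obtain ⟨u, huC, hp0, hp, hPp, hQu⟩ := exists_isStarProjection_star_mul_self B
    (mul_mem (mul_mem hQC hcC) hPC) hc hP.isSelfAdjoint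
    (by rw [mul_assoc, hP.isIdempotentElem.eq])
    (by rw [← mul_assoc, ← mul_assoc, hQ.isIdempotentElem.eq])
  set p := star u * u
  set q := u * star u
  have hq : IsStarProjection q := hp.mul_star_self
  have hQq : Q * q = q := by rw [← mul_assoc, hQu]
  have htrpq (b : E →L[ℂ] E) (hb : b ∈ B) :
      LinearMap.trace ℂ E ↑(p * b) = LinearMap.trace ℂ E ↑(q * b) := by
    have hub : b * u = u * b := ((mem_centralizer_iff ℂ).mp huC b hb).1
    calc LinearMap.trace ℂ E ↑(star u * u * b)
        = LinearMap.trace ℂ E (↑(star u * b) * ↑u) := by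
          rw [mul_assoc, ← hub, ← mul_assoc, ContinuousLinearMap.toLinearMap_mul]
      _ = LinearMap.trace ℂ E (↑u * ↑(star u * b)) := LinearMap.trace_mul_comm _ _ _
      _ = LinearMap.trace ℂ E ↑(u * star u * b) := by
          rw [← ContinuousLinearMap.toLinearMap_mul, mul_assoc]
  have hrank : finrank ℂ (LinearMap.range ((P - p : E →L[ℂ] E) : E →ₗ[ℂ] E)) < n := by
    have := ContinuousLinearMap.finrank_range_sub_add_finrank_range hP hp hPp
    have := ContinuousLinearMap.finrank_range_eq_zero_iff.not.mpr hp0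
    omega
  have hrest := ih _ hrank (hp.sub_of_mul_eq_right hP hPp) (hq.sub_of_mul_eq_right hQ hQq)
    (fun b hb => by
      simp only [sub_mul, ContinuousLinearMap.toLinearMap_sub, map_sub, htr b hb, htrpq b hb])
    (sub_mem hPC (mul_mem (star_mem huC) huC)) (sub_mem hQC (mul_mem huC (star_mem huC))) rfl
  have hpP : p * P = p := by
    simpa [hp.isSelfAdjoint.star_eq, hP.isSelfAdjoint.star_eq] using congr(star $hPp)
  have hqQ : q * Q = q := by
    simpa [hq.isSelfAdjoint.star_eq, hQ.isSelfAdjoint.star_eq] using congr(star $hQq)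
  have h := IsMurrayVonNeumannEquiv.add ⟨u, huC, rfl, rfl⟩ hrest hp hq
    (hp.sub_of_mul_eq_right hP hPp) (hq.sub_of_mul_eq_right hQ hQq)
    (by rw [mul_sub, hpP, hp.isIdempotentElem.eq, sub_self])
    (by rw [mul_sub, hqQ, hq.isIdempotentElem.eq, sub_self])
  rwa [add_sub_cancel, add_sub_cancel] at h

end StarSubalgebra

end InnerProductSpace

namespace Matrix

theorem trace_fromBlocks {R m n : Type*} [AddCommMonoid R] [Fintype m] [Fintype n]
    (A : Matrix m m R) (B : Matrix m n R) (C : Matrix n m R) (D : Matrix n n R) :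
    (fromBlocks A B C D).trace = A.trace + D.trace := by
  simp [trace, Fintype.sum_sum_type]

def fromBlocksStarAlgHom {R m n : Type*} [CommRing R] [StarRing R] [Fintype m] [Fintype n]
    [DecidableEq m] [DecidableEq n] :
    Matrix m m R × Matrix n n R →⋆ₐ[R] Matrix (m ⊕ n) (m ⊕ n) R where
  toFun a := fromBlocks a.1 0 0 a.2
  map_one' := fromBlocks_one
  map_mul' a b := by simp [fromBlocks_multiply]
  map_zero' := by simp
  map_add' a b := by simp [fromBlocks_add]
  commutes' r := by simp [Algebra.algebraMap_eq_smul_one, fromBlocks_smul, ← fromBlocks_one]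
  map_star' a := by simp [star_eq_conjTranspose, fromBlocks_conjTranspose]

variable {n ι : Type*} [Fintype n] [DecidableEq n]

theorem trace_toEuclideanCLM (M : Matrix n n ℂ) :
    LinearMap.trace ℂ _ (toEuclideanCLM (𝕜 := ℂ) M : EuclideanSpace ℂ n →ₗ[ℂ] _) = M.trace := by
  rw [LinearMap.trace_eq_matrix_trace ℂ (PiLp.basisFun 2 ℂ n)]
  exact congrArg trace (LinearMap.toMatrix_toLin _ _ M)

theorem exists_mem_unitaryGroup_of_fromBlocks {H H' : ι → Matrix n n ℂ}
    {M : Matrix (n ⊕ n) (n ⊕ n) ℂ} (hMP : M * fromBlocks 1 0 0 0 = M)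
    (hQM : fromBlocks 0 0 0 1 * M = M) (hMM : star M * M = fromBlocks 1 0 0 0)
    (hMK : ∀ j, M * fromBlocks (H j) 0 0 (H' j) = fromBlocks (H j) 0 0 (H' j) * M) :
    ∃ U ∈ unitaryGroup n ℂ, ∀ j, H' j = U * H j * Uᴴ := by
  set X := M.toBlocks₂₁
  have hM : M = fromBlocks 0 0 X 0 := by
    rw [← fromBlocks_toBlocks M, fromBlocks_multiply] at hMP hQM
    simp only [fromBlocks_inj, Matrix.mul_one, Matrix.mul_zero, Matrix.zero_mul, Matrix.one_mul,
      add_zero, zero_add] at hMP hQM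
    rw [← fromBlocks_toBlocks M, ← hMP.2.1, ← hMP.2.2.2, ← hQM.1]
  rw [hM, star_eq_conjTranspose, fromBlocks_conjTranspose, fromBlocks_multiply] at hMM
  simp only [fromBlocks_inj, conjTranspose_zero, Matrix.mul_zero, Matrix.zero_mul, add_zero,
    zero_add] at hMM
  have hXX : X * Xᴴ = 1 := mul_eq_one_comm.mp hMM.1
  refine ⟨X, mem_unitaryGroup_iff.mpr hXX, fun j => ?_⟩
  have h := hMK j
  rw [hM, fromBlocks_multiply, fromBlocks_multiply] at h
  simp only [fromBlocks_inj, Matrix.mul_zero, Matrix.zero_mul, add_zero, zero_add] at h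
  rw [h.2.2.1, Matrix.mul_assoc, hXX, Matrix.mul_one]

theorem exists_mem_unitaryGroup_of_trace_eq {H H' : ι → Matrix n n ℂ}
    (htr : ∀ a ∈ StarAlgebra.adjoin ℂ (Set.range fun j => (H j, H' j)), a.1.trace = a.2.trace) :
    ∃ U ∈ unitaryGroup n ℂ, ∀ j, H' j = U * H j * Uᴴ := by
  set e := toEuclideanCLM (𝕜 := ℂ) (n := n ⊕ n)
  set φ := e.toStarAlgHom.comp fromBlocksStarAlgHom
  set B := (StarAlgebra.adjoin ℂ (Set.range fun j => (H j, H' j))).map φ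
  have hcentral (x : Matrix n n ℂ × Matrix n n ℂ) (hx : ∀ a, a * x = x * a) :
      φ x ∈ StarSubalgebra.centralizer ℂ (B : Set _) := by
    rw [StarSubalgebra.mem_centralizer_iff]
    intro g hg
    obtain ⟨a, -, rfl⟩ := StarSubalgebra.mem_map.mp hg
    simp only [← map_star, ← map_mul, hx, and_self]
  have htrace (a : Matrix n n ℂ × Matrix n n ℂ) :
      LinearMap.trace ℂ _ (φ a : EuclideanSpace ℂ (n ⊕ n) →ₗ[ℂ] _) = a.1.trace + a.2.trace := by
    simp [φ, e, trace_toEuclideanCLM, fromBlocksStarAlgHom, trace_fromBlocks]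
  have hP : IsStarProjection (φ (1, 0)) :=
    IsStarProjection.map ⟨Prod.ext (mul_one _) (mul_zero _), Prod.ext (star_one _) (star_zero _)⟩ φ
  have hQ : IsStarProjection (φ (0, 1)) :=
    IsStarProjection.map ⟨Prod.ext (mul_zero _) (mul_one _), Prod.ext (star_zero _) (star_one _)⟩ φ
  obtain ⟨W, hWC, hWP, hWQ⟩ := B.isMurrayVonNeumannEquiv_of_trace_eq
    (hcentral _ fun a => Prod.ext (by simp) (by simp))
    (hcentral _ fun a => Prod.ext (by simp) (by simp)) hP hQ (by
      intro b hb
      obtain ⟨a, ha, rfl⟩ := StarSubalgebra.mem_map.mp hb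
      rw [← map_mul, ← map_mul, htrace, htrace]
      simpa using htr a ha)
  obtain ⟨M, rfl⟩ : ∃ M, e M = W := ⟨e.symm W, e.apply_symm_apply W⟩
  refine exists_mem_unitaryGroup_of_fromBlocks (M := M) (H := H) (H' := H')
    (EquivLike.injective e ?_) (EquivLike.injective e ?_) (EquivLike.injective e ?_)
    fun j => EquivLike.injective e ?_
  · rw [map_mul]
    exact mul_eq_self_of_star_mul_self_eq hP hWP
  · rw [map_mul]
    exact mul_eq_self_of_mul_star_self_eq hQ hWQ
  · rw [map_mul, map_star]
    exact hWP
  · have hKB : φ (H j, H' j) ∈ B :=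
      StarSubalgebra.mem_map.mpr ⟨_, StarAlgebra.subset_adjoin ℂ _ ⟨j, rfl⟩, rfl⟩
    rw [map_mul, map_mul]
    exact ((StarSubalgebra.mem_centralizer_iff ℂ).mp hWC _ hKB).1.symm

theorem trace_fst_eq_trace_snd_of_mem_adjoin {H H' : ι → Matrix n n ℂ}
    (htr : ∀ L : List ι, L.length ≤ 2 * Fintype.card n ^ 2 →
      (L.map H).prod.trace = (L.map H').prod.trace)
    {a : Matrix n n ℂ × Matrix n n ℂ} (ha : a ∈ Algebra.adjoin ℂ (Set.range fun j => (H j, H' j))) :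
    a.1.trace = a.2.trace := by
  let f : Matrix n n ℂ × Matrix n n ℂ →ₗ[ℂ] ℂ :=
    (traceLinearMap n ℂ ℂ).comp (LinearMap.fst ℂ _ _) -
      (traceLinearMap n ℂ ℂ).comp (LinearMap.snd ℂ _ _)
  have hdim : finrank ℂ (Matrix n n ℂ × Matrix n n ℂ) = 2 * Fintype.card n ^ 2 := by
    simp [Module.finrank_prod, Module.finrank_matrix]
    ring
  have hker : Subalgebra.toSubmodule (Algebra.adjoin ℂ (Set.range fun j => (H j, H' j))) ≤
      LinearMap.ker f := by
    refine (Algebra.adjoin_range_le_span_prod_map _).trans (Submodule.span_le.mpr ?_)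
    rintro _ ⟨L, hL, rfl⟩
    have h₁ : (L.map fun j => (H j, H' j)).prod.1 = (L.map H).prod := by
      simpa [Function.comp_def] using map_list_prod (MonoidHom.fst _ _) (L.map fun j => (H j, H' j))
    have h₂ : (L.map fun j => (H j, H' j)).prod.2 = (L.map H').prod := by
      simpa [Function.comp_def] using map_list_prod (MonoidHom.snd _ _) (L.map fun j => (H j, H' j))
    simp [f, h₁, h₂, htr L (hdim ▸ hL)]
  simpa [f, sub_eq_zero] using hker ha

end Matrix

theorem three_le_of_le_div_two {m c : ℕ} (hm : 1 ≤ m)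
    (hc : 0 < c ∧ (m : ℤ) ≤ ((c : ℤ) ^ 2 - 3 * c + 2) / 2) : 3 ≤ c := by
  obtain ⟨hc0, hcm⟩ := hc
  by_contra! hc3
  interval_cases c <;> norm_num at hcm <;> omega

theorem two_mul_sq_le_ceil {c : ℕ} (hc : 3 ≤ c) (d : ℕ) :
    ((2 * d ^ 2 : ℕ) : ℤ) ≤ ⌈(((c * d : ℕ) : ℚ) ^ 2 + 2) / 3⌉ := by
  have h9 : ((9 * d ^ 2 : ℕ) : ℚ) ≤ ((c * d) ^ 2 : ℕ) := by
    rw [mul_pow]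
    exact_mod_cast Nat.mul_le_mul_right _ (Nat.pow_le_pow_left hc 2)
  have : ((2 * d ^ 2 : ℕ) : ℚ) ≤ (((c * d : ℕ) : ℚ) ^ 2 + 2) / 3 := by
    rw [le_div_iff₀ (by norm_num : (0 : ℚ) < 3)]
    push_cast at h9 ⊢
    linarith [sq_nonneg (d : ℚ)]
  exact_mod_cast this.trans (Int.le_ceil _)

theorem word_traces_up_to_bound_imply_simultaneous_unitary_similarity_general
    (d m c : ℕ) (hm : 1 ≤ m)
    (hc : IsLeast {c' : ℕ | 0 < c' ∧ (m : ℤ) ≤ ((c' : ℤ) ^ 2 - 3 * c' + 2) / 2} c)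
    (H H' : Fin m → Matrix (Fin d) (Fin d) ℂ)
    (hH : ∀ j, (H j).IsHermitian) (hH' : ∀ j, (H' j).IsHermitian)
    (htr : ∀ (ℓ : ℕ), 1 ≤ ℓ → (ℓ : ℤ) ≤ ⌈(((c * d : ℕ) : ℚ) ^ 2 + 2) / 3⌉ →
      ∀ w : Fin ℓ → Fin m, wordTrace H w = wordTrace H' w) :
    SimUnitarilySimilar H H' := by
  have hbound := two_mul_sq_le_ceil (three_le_of_le_div_two hm hc.1) d
  have hshort (L : List (Fin m)) (hL : L.length ≤ 2 * Fintype.card (Fin d) ^ 2) :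
      (L.map H).prod.trace = (L.map H').prod.trace := by
    rcases eq_or_ne L [] with rfl | hL0
    · rfl
    have hℓ : (L.length : ℤ) ≤ ⌈(((c * d : ℕ) : ℚ) ^ 2 + 2) / 3⌉ :=
      le_trans (by exact_mod_cast (by simpa using hL : L.length ≤ 2 * d ^ 2)) hbound
    simpa [wordTrace, List.ofFn_getElem_eq_map] using
      htr L.length (List.length_pos_iff.mpr hL0) hℓ (fun i => L[i])
  have hsa : ∀ x ∈ Set.range fun j => (H j, H' j), IsSelfAdjoint x := by
    rintro _ ⟨j, rfl⟩
    exact Prod.ext (hH j) (hH' j)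
  refine exists_mem_unitaryGroup_of_trace_eq fun a ha => trace_fst_eq_trace_snd_of_mem_adjoin
    hshort ?_
  rwa [← StarSubalgebra.mem_toSubalgebra,
    StarAlgebra.adjoin_toSubalgebra_of_isSelfAdjoint hsa] at ha

theorem word_traces_up_to_bound_imply_simultaneous_unitary_similarity
    (d m c : ℕ) (hd : 1 ≤ d) (hm : 1 ≤ m)
    (hc : IsLeast {c' : ℕ | 0 < c' ∧ (m : ℤ) ≤ ((c' : ℤ) ^ 2 - 3 * c' + 2) / 2} c)
    (H H' : Fin m → Matrix (Fin d) (Fin d) ℂ)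
    (hH : ∀ j, (H j).IsHermitian) (hH' : ∀ j, (H' j).IsHermitian)
    (htr : ∀ (ℓ : ℕ), 1 ≤ ℓ → (ℓ : ℤ) ≤ ⌈(((c * d : ℕ) : ℚ) ^ 2 + 2) / 3⌉ →
      ∀ w : Fin ℓ → Fin m, wordTrace H w = wordTrace H' w) :
    SimUnitarilySimilar H H' :=
  word_traces_up_to_bound_imply_simultaneous_unitary_similarity_general d m c hm hc H H' hH hH' htr
end

section
/- Let H₁,…,H_m be Hermitian d×d complex matrices that are simultaneously stoquasticizable. Then for every pair of indices i, j, the characteristic polynomial p of the Hermitian matrix i·(H_i H_j − H_j H_i) satisfies p(−X) = (−1)^d · p(X); in particular, for every eigenvalue λ ≠ 0 of i·(H_i H_j − H_j H_i), −λ is also an eigenvalue, with the same multiplicity. -/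
/-!
A stoquastic matrix is Hermitian with real off-diagonal entries, hence real symmetric. After the
common unitary change of basis, `H i` and `H j` become symmetric matrices `A`, `B`, so
`M = I • (A * B - B * A)` satisfies `Mᵀ = -M`. Then `charpoly (-M) = charpoly Mᵀ = charpoly M`,
which is the identity `p(-X) = (-1)^d p(X)`; substituting `-X` reflects root multiplicities.
-/

open Matrix Polynomial

/-- A matrix is stoquastic if it is Hermitian and all off-diagonal entries are
real and nonpositive. -/
def IsStoquastic {d : ℕ} (H : Matrix (Fin d) (Fin d) ℂ) : Prop :=
  H.IsHermitian ∧ ∀ j k : Fin d, j ≠ k → (H j k).im = 0 ∧ (H j k).re ≤ 0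

/-- A tuple of Hermitian matrices is simultaneously stoquasticizable if a single
unitary conjugates all of them into stoquastic form. -/
def SimStoquasticizable {d m : ℕ} (H : Fin m → Matrix (Fin d) (Fin d) ℂ) : Prop :=
  ∃ U ∈ Matrix.unitaryGroup (Fin d) ℂ, ∀ j, IsStoquastic (U * H j * Uᴴ)

namespace Polynomial

variable {R : Type*} [CommRing R] [IsDomain R]

theorem rootMultiplicity_neg_of_comp_neg_X_eq {p : R[X]} {n : ℕ}
    (hp : p.comp (-X) = (-1) ^ n * p) (a : R) :
    p.rootMultiplicity (-a) = p.rootMultiplicity a := by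
  rcases eq_or_ne p 0 with rfl | hp0
  · simp
  have hneg : p.comp (-X) = p.comp (C (-1) * X + C 0) := by simp
  have hunit : ((-1) ^ n * p).rootMultiplicity a = p.rootMultiplicity a := by
    rw [rootMultiplicity_mul (mul_ne_zero (pow_ne_zero _ (neg_ne_zero.2 one_ne_zero)) hp0),
      ← C_1, ← C_neg, ← C_pow, rootMultiplicity_C, zero_add]
  rw [← hunit, ← hp, hneg, rootMultiplicity_comp_C_mul_X_add_C _ _ _ _ isUnit_one.neg,
    neg_one_mul, add_zero]

end Polynomial

namespace Matrix

variable {n R : Type*} [Fintype n] [CommRing R]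

theorem transpose_smul_commutator_eq_neg {A B : Matrix n n R} (hA : Aᵀ = A) (hB : Bᵀ = B)
    (c : R) : (c • (A * B - B * A))ᵀ = -(c • (A * B - B * A)) := by
  rw [transpose_smul, transpose_sub, transpose_mul, transpose_mul, hA, hB, ← smul_neg, neg_sub]

variable [DecidableEq n]

theorem conj_smul_commutator {U V : Matrix n n R} (hVU : V * U = 1) (A B : Matrix n n R) (c : R) :
    U * (c • (A * B - B * A)) * V =
      c • ((U * A * V) * (U * B * V) - (U * B * V) * (U * A * V)) := by
  simp only [Matrix.mul_smul, Matrix.smul_mul, Matrix.mul_sub, Matrix.sub_mul, mul_assoc]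
  simp only [← mul_assoc V U, hVU, one_mul]

theorem charpoly_comp_neg_X (M : Matrix n n R) :
    M.charpoly.comp (-X) = (-1) ^ Fintype.card n * (-M).charpoly := by
  have hmap : (charmatrix M).map (compRingHom (-X)) = -charmatrix (-M) := by
    refine Matrix.ext fun k l => ?_
    by_cases hkl : k = l
    · subst hkl
      simp only [map_apply, coe_compRingHom, charmatrix_apply_eq, neg_apply, sub_comp, X_comp,
        C_comp, map_neg]
      ring
    · simp [charmatrix_apply_ne _ _ _ hkl]
  rw [charpoly, ← coe_compRingHom_apply, RingHom.map_det, RingHom.mapMatrix_apply, hmap,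
    det_neg, charpoly]

theorem charpoly_comp_neg_X_of_transpose_eq_neg {M : Matrix n n R} (hM : Mᵀ = -M) :
    M.charpoly.comp (-X) = (-1) ^ Fintype.card n * M.charpoly := by
  rw [charpoly_comp_neg_X, ← hM, charpoly_transpose]

theorem charpoly_conj_of_mul_eq_one {U V : Matrix n n R} (hVU : V * U = 1) (M : Matrix n n R) :
    (U * M * V).charpoly = M.charpoly := by
  rw [charpoly_mul_comm, ← mul_assoc, hVU, one_mul]

end Matrix

theorem IsStoquastic.transpose_eq {d : ℕ} {H : Matrix (Fin d) (Fin d) ℂ} (hH : IsStoquastic H) :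
    Hᵀ = H := by
  ext a b
  rcases eq_or_ne a b with rfl | hab
  · rfl
  · rw [transpose_apply, ← hH.1.apply, Complex.star_def, Complex.conj_eq_iff_im]
    exact (hH.2 a b hab).1

theorem simStoquasticizable_implies_paired_commutator_spectrum_general
    (d m : ℕ) (H : Fin m → Matrix (Fin d) (Fin d) ℂ)
    (hstoq : SimStoquasticizable H) (i j : Fin m) :
    (Matrix.charpoly (Complex.I • (H i * H j - H j * H i))).comp (-X) =
        (-1 : Polynomial ℂ) ^ d * Matrix.charpoly (Complex.I • (H i * H j - H j * H i)) ∧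
      ∀ lam : ℂ, lam ≠ 0 →
        (Matrix.charpoly (Complex.I • (H i * H j - H j * H i))).rootMultiplicity lam =
          (Matrix.charpoly (Complex.I • (H i * H j - H j * H i))).rootMultiplicity (-lam) := by
  obtain ⟨U, hU, hstoq⟩ := hstoq
  have hUU : Uᴴ * U = 1 := Matrix.UnitaryGroup.star_mul_self ⟨U, hU⟩
  have hskew : (U * (Complex.I • (H i * H j - H j * H i)) * Uᴴ)ᵀ =
      -(U * (Complex.I • (H i * H j - H j * H i)) * Uᴴ) := by
    rw [conj_smul_commutator hUU]
    exact transpose_smul_commutator_eq_neg (hstoq i).transpose_eq (hstoq j).transpose_eq _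
  have hpaired := charpoly_comp_neg_X_of_transpose_eq_neg hskew
  rw [charpoly_conj_of_mul_eq_one hUU, Fintype.card_fin] at hpaired
  exact ⟨hpaired, fun lam _ => (rootMultiplicity_neg_of_comp_neg_X_eq hpaired lam).symm⟩

theorem simStoquasticizable_implies_paired_commutator_spectrum
    (d m : ℕ) (H : Fin m → Matrix (Fin d) (Fin d) ℂ)
    (hH : ∀ j, (H j).IsHermitian)
    (hstoq : SimStoquasticizable H) (i j : Fin m) :
    (Matrix.charpoly (Complex.I • (H i * H j - H j * H i))).comp (-X) =
        (-1 : Polynomial ℂ) ^ d * Matrix.charpoly (Complex.I • (H i * H j - H j * H i)) ∧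
      ∀ lam : ℂ, lam ≠ 0 →
        (Matrix.charpoly (Complex.I • (H i * H j - H j * H i))).rootMultiplicity lam =
          (Matrix.charpoly (Complex.I • (H i * H j - H j * H i))).rootMultiplicity (-lam) :=
  simStoquasticizable_implies_paired_commutator_spectrum_general d m H hstoq i j
end

section
/- Let H₁,…,H_m be traceless Hermitian d×d complex matrices. If the tuple (H₁,…,H_m) is simultaneously stoquasticizable, then the J-closure W of {H₁,…,H_m} satisfies 2·dim_ℝ(W) ≤ d² + d − 1. -/
open Matrix

/-- The traceless Jordan product `J(A,B) = (AB + BA)/2 − (Tr(AB)/d)·I`. -/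
noncomputable def tracelessJordan {d : ℕ} (A B : Matrix (Fin d) (Fin d) ℂ) :
    Matrix (Fin d) (Fin d) ℂ :=
  (2⁻¹ : ℂ) • (A * B + B * A) - ((A * B).trace / (d : ℂ)) • (1 : Matrix (Fin d) (Fin d) ℂ)

/-- An `ℝ`-subspace of the `d × d` complex matrices is J-closed if it is closed under
the traceless Jordan product. -/
def JClosed {d : ℕ} (W : Submodule ℝ (Matrix (Fin d) (Fin d) ℂ)) : Prop :=
  ∀ X ∈ W, ∀ Y ∈ W, tracelessJordan X Y ∈ W

/-- The J-closure of a set of matrices: the smallest J-closed `ℝ`-subspace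
containing it. -/
noncomputable def JClosure {d : ℕ} (S : Set (Matrix (Fin d) (Fin d) ℂ)) :
    Submodule ℝ (Matrix (Fin d) (Fin d) ℂ) :=
  sInf {W | JClosed W ∧ S ⊆ W}

/-! Conjugation by the stoquasticizing unitary `U` is a trace-preserving algebra automorphism,
so it commutes with `J`. It sends every `H j` to a traceless stoquastic, hence real symmetric,
matrix, and `J` of two real symmetric matrices is again real symmetric. So the J-closure lies in
`U† S U`, where `S` is the space of traceless real symmetric matrices, of dimension
`d (d + 1) / 2 - 1`: the symmetrized real parts `A i j + A j i` embed `S` into the hyperplane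
`∑ i, v s(i, i) = 0` of `Sym2 (Fin d) → ℝ`. -/

section Jordan

variable {d : ℕ}

lemma tracelessJordan_comm (A B : Matrix (Fin d) (Fin d) ℂ) :
    tracelessJordan A B = tracelessJordan B A := by
  rw [tracelessJordan, tracelessJordan, add_comm (A * B), trace_mul_comm]

lemma tracelessJordan_transpose (A B : Matrix (Fin d) (Fin d) ℂ) :
    (tracelessJordan A B)ᵀ = tracelessJordan Bᵀ Aᵀ := by
  simp only [tracelessJordan, transpose_sub, transpose_smul, transpose_add, transpose_mul,
    transpose_one, ← trace_transpose (A * B), add_comm (Bᵀ * Aᵀ)]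

lemma tracelessJordan_conjTranspose (A B : Matrix (Fin d) (Fin d) ℂ) :
    (tracelessJordan A B)ᴴ = tracelessJordan Bᴴ Aᴴ := by
  simp only [tracelessJordan, conjTranspose_sub, conjTranspose_smul, conjTranspose_add,
    conjTranspose_mul, conjTranspose_one, star_div₀, ← trace_conjTranspose, star_inv₀,
    star_ofNat, star_natCast, add_comm (Bᴴ * Aᴴ)]

lemma trace_tracelessJordan (A B : Matrix (Fin d) (Fin d) ℂ) :
    (tracelessJordan A B).trace = 0 := by
  rcases eq_or_ne d 0 with rfl | hd
  · simp [Matrix.trace]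
  · have : (d : ℂ) ≠ 0 := Nat.cast_ne_zero.mpr hd
    simp only [tracelessJordan, trace_sub, trace_smul, trace_add, trace_one, Fintype.card_fin,
      trace_mul_comm B A, smul_eq_mul]
    field_simp
    ring

lemma map_tracelessJordan {F : Type*}
    [FunLike F (Matrix (Fin d) (Fin d) ℂ) (Matrix (Fin d) (Fin d) ℂ)] [AlgHomClass F ℂ _ _]
    (f : F) (hf : ∀ X, (f X).trace = X.trace) (A B : Matrix (Fin d) (Fin d) ℂ) :
    f (tracelessJordan A B) = tracelessJordan (f A) (f B) := by
  simp only [tracelessJordan, map_sub, map_smul, map_add, map_mul, map_one, ← hf (A * B)]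

end Jordan

lemma jClosure_le {d : ℕ} {S : Set (Matrix (Fin d) (Fin d) ℂ)}
    {W : Submodule ℝ (Matrix (Fin d) (Fin d) ℂ)} (hW : JClosed W) (hS : S ⊆ W) :
    JClosure S ≤ W :=
  sInf_le ⟨hW, hS⟩

lemma JClosed.comap {d : ℕ} {W : Submodule ℝ (Matrix (Fin d) (Fin d) ℂ)} (hW : JClosed W)
    (f : Matrix (Fin d) (Fin d) ℂ →ₗ[ℝ] Matrix (Fin d) (Fin d) ℂ)
    (hf : ∀ A B, f (tracelessJordan A B) = tracelessJordan (f A) (f B)) :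
    JClosed (W.comap f) := by
  intro X hX Y hY
  rw [Submodule.mem_comap, hf]
  exact hW _ hX _ hY

def tracelessRealSymmetric (n : Type*) [Fintype n] : Submodule ℝ (Matrix n n ℂ) where
  carrier := {A | A.IsHermitian ∧ A.IsSymm ∧ A.trace = 0}
  zero_mem' := ⟨isHermitian_zero, isSymm_zero, trace_zero n ℂ⟩
  add_mem' := fun ⟨hA, hA', hA''⟩ ⟨hB, hB', hB''⟩ =>
    ⟨hA.add hB, hA'.add hB', by rw [trace_add, hA'', hB'', add_zero]⟩
  smul_mem' := fun r _ ⟨hA, hA', hA''⟩ =>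
    ⟨hA.smul (IsSelfAdjoint.all r), hA'.smul r, by rw [trace_smul, hA'', smul_zero]⟩

lemma jClosed_tracelessRealSymmetric (d : ℕ) : JClosed (tracelessRealSymmetric (Fin d)) := by
  rintro A ⟨hA, hA', -⟩ B ⟨hB, hB', -⟩
  refine ⟨?_, ?_, trace_tracelessJordan A B⟩
  · rw [IsHermitian, tracelessJordan_conjTranspose, hA.eq, hB.eq, tracelessJordan_comm]
  · rw [IsSymm, tracelessJordan_transpose, hA'.eq, hB'.eq, tracelessJordan_comm]

lemma IsStoquastic.mem_tracelessRealSymmetric {d : ℕ} {K : Matrix (Fin d) (Fin d) ℂ}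
    (hK : IsStoquastic K) (htr : K.trace = 0) : K ∈ tracelessRealSymmetric (Fin d) := by
  refine ⟨hK.1, IsSymm.ext fun i j => ?_, htr⟩
  rcases eq_or_ne i j with rfl | hij
  · rfl
  · rw [← hK.1.apply j i]
    exact Complex.conj_eq_iff_im.mpr (hK.2 i j hij).1

def symmetrizedRe (n : Type*) : Matrix n n ℂ →ₗ[ℝ] Sym2 n → ℝ where
  toFun A := Sym2.lift
    ⟨fun i j => (A i j + A j i).re, fun i j => congrArg Complex.re (add_comm _ _)⟩
  map_add' A B := by
    ext e
    induction e using Sym2.ind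
    simp only [Sym2.lift_mk, Matrix.add_apply, Complex.add_re, Pi.add_apply]
    ring
  map_smul' r A := by
    ext e
    induction e using Sym2.ind
    simp only [Sym2.lift_mk, Matrix.smul_apply, Complex.add_re, Complex.smul_re, Pi.smul_apply,
      RingHom.id_apply, smul_eq_mul]
    ring

section Dimension

variable {n : Type*} [Fintype n]

lemma sum_symmetrizedRe_diag (A : Matrix n n ℂ) :
    ∑ i, symmetrizedRe n A s(i, i) = 2 * A.trace.re := by
  simp only [symmetrizedRe, LinearMap.coe_mk, AddHom.coe_mk, Sym2.lift_mk, Complex.add_re,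
    trace, diag, Complex.re_sum, Finset.mul_sum]
  exact Finset.sum_congr rfl fun i _ => (two_mul _).symm

lemma eq_zero_of_symmetrizedRe_eq_zero {A : Matrix n n ℂ} (hA : A ∈ tracelessRealSymmetric n)
    (h : symmetrizedRe n A = 0) : A = 0 := by
  obtain ⟨hAh, hAs, -⟩ := hA
  ext i j
  have hre : (A i j + A j i).re = 0 := congr_fun h s(i, j)
  have hsymm : A j i = A i j := hAs.apply i j
  have hreal : star (A i j) = A i j := (hAh.apply j i).trans hsymm
  rw [hsymm, Complex.add_re] at hre
  exact Complex.ext (by simpa using hre) (Complex.conj_eq_iff_im.mp hreal)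

lemma finrank_tracelessRealSymmetric_lt [DecidableEq n] [Nonempty n] :
    Module.finrank ℝ (tracelessRealSymmetric n) < Fintype.card (Sym2 n) := by
  let diagSum : Module.Dual ℝ (Sym2 n → ℝ) := ∑ i, LinearMap.proj s(i, i)
  have hdiagSum : diagSum ≠ 0 := fun h => by
    have := LinearMap.congr_fun h fun _ => 1
    simp [diagSum] at this
  let ψ : tracelessRealSymmetric n →ₗ[ℝ] LinearMap.ker diagSum :=
    ((symmetrizedRe n).domRestrict _).codRestrict _ fun A => by
      simp [diagSum, sum_symmetrizedRe_diag, A.2.2.2]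
  have hψ : Function.Injective ψ := by
    rw [← LinearMap.ker_eq_bot, LinearMap.ker_eq_bot']
    intro A hA
    exact Subtype.ext (eq_zero_of_symmetrizedRe_eq_zero A.2 (congr_arg Subtype.val hA))
  calc Module.finrank ℝ (tracelessRealSymmetric n)
      ≤ Module.finrank ℝ (LinearMap.ker diagSum) :=
        LinearMap.finrank_le_finrank_of_injective hψ
    _ < Module.finrank ℝ (LinearMap.ker diagSum) + 1 := Nat.lt_succ_self _
    _ = Fintype.card (Sym2 n) := by
      rw [diagSum.finrank_ker_add_one_of_ne_zero hdiagSum, Module.finrank_fintype_fun_eq_card]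

end Dimension

lemma two_mul_card_sym2_fin (d : ℕ) : 2 * Fintype.card (Sym2 (Fin d)) = d ^ 2 + d := by
  rw [Sym2.card, Fintype.card_fin, Nat.choose_two_right, Nat.add_sub_cancel, mul_comm (d + 1),
    Nat.mul_div_cancel' (Nat.even_mul_succ_self d).two_dvd]
  ring

lemma trace_conjStarAlgAut {n : Type*} [Fintype n] [DecidableEq n]
    (u : unitary (Matrix n n ℂ)) (X : Matrix n n ℂ) :
    (Unitary.conjStarAlgAut ℂ _ u X).trace = X.trace := by
  rw [Unitary.conjStarAlgAut_apply, trace_mul_cycle, Unitary.coe_star_mul_self, one_mul]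

theorem simStoquasticizable_JClosure_dim_bound_general
    (d m : ℕ) (H : Fin m → Matrix (Fin d) (Fin d) ℂ)
    (htr : ∀ j, (H j).trace = 0)
    (hstoq : SimStoquasticizable H) :
    2 * Module.finrank ℝ (JClosure (Set.range H)) ≤ d ^ 2 + d - 1 := by
  obtain ⟨U, hU, hstoq⟩ := hstoq
  rcases eq_or_ne d 0 with rfl | hd
  · simp [Module.finrank_zero_of_subsingleton]
  have : Nonempty (Fin d) := ⟨⟨0, Nat.pos_of_ne_zero hd⟩⟩
  let conjU := Unitary.conjStarAlgAut ℂ _ (⟨U, hU⟩ : unitary (Matrix (Fin d) (Fin d) ℂ))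
  let e := (conjU.toAlgEquiv.restrictScalars ℝ).toLinearEquiv
  have hJ : JClosure (Set.range H) ≤ (tracelessRealSymmetric (Fin d)).comap e.toLinearMap := by
    refine jClosure_le ((jClosed_tracelessRealSymmetric d).comap _
      (map_tracelessJordan conjU (trace_conjStarAlgAut _))) ?_
    rintro _ ⟨j, rfl⟩
    have hconjU : conjU (H j) = U * H j * Uᴴ := Unitary.conjStarAlgAut_apply (S := ℂ) _ _
    have htrU : (U * H j * Uᴴ).trace = 0 := by rw [← hconjU, trace_conjStarAlgAut, htr j]
    rw [SetLike.mem_coe, Submodule.mem_comap, LinearEquiv.coe_coe]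
    exact hconjU ▸ (hstoq j).mem_tracelessRealSymmetric htrU
  have hdim := Submodule.finrank_mono hJ
  rw [Submodule.comap_equiv_eq_map_symm, LinearEquiv.finrank_map_eq] at hdim
  have hS := finrank_tracelessRealSymmetric_lt (n := Fin d)
  have hcard := two_mul_card_sym2_fin d
  omega

theorem simStoquasticizable_JClosure_dim_bound
    (d m : ℕ) (H : Fin m → Matrix (Fin d) (Fin d) ℂ)
    (hH : ∀ j, (H j).IsHermitian) (htr : ∀ j, (H j).trace = 0)
    (hstoq : SimStoquasticizable H) :
    2 * Module.finrank ℝ (JClosure (Set.range H)) ≤ d ^ 2 + d - 1 :=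
  simStoquasticizable_JClosure_dim_bound_general d m H htr hstoq
end

section
/- Let d ≥ 3 and m ≥ 2. With respect to an additive Haar (Lebesgue) measure on the m-fold product of the real vector space of Hermitian d×d complex matrices, the set of tuples (H₁,…,H_m) that are simultaneously stoquasticizable has measure zero. -/
/-!
If the matrices `U Hⱼ U†` are stoquastic they are real, so the trace of every word in them is
real; as `tr (U w U†) = tr w`, the trace of every word in the `Hⱼ` is then real. For Hermitian
`A, B` the conjugate of `tr (A A B B A B)` is the trace of the reversed word `B A B B A A`, which
is not a cyclic shift of it, and indeed a 3 × 3 example padded by zeros makes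
`Im tr (H₁ H₁ H₂ H₂ H₁ H₂)` nonzero. So the stoquasticizable tuples lie in the zero set of a
nonzero polynomial in real coordinates. Such a zero set is Lebesgue-null (induction on the number
of variables: Fubini, and finiteness of the root set of a nonzero polynomial in one variable), and
every additive Haar measure is absolutely continuous with respect to Lebesgue measure.
-/

open Matrix MeasureTheory

theorem MeasureTheory.Measure.measure_prod_null_of_ae_finite_fiber {α β : Type*}
    [MeasurableSpace α] [MeasurableSpace β] {μ : Measure α} {ν : Measure β} [NullSingletonClass μ]
    [SFinite μ] [SFinite ν] {s : Set (α × β)} (hs : MeasurableSet s)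
    (h : ∀ᵐ y ∂ν, {x | (x, y) ∈ s}.Finite) :
    μ.prod ν s = 0 := by
  rw [Measure.prod_apply_symm hs]
  refine (lintegral_congr_ae ?_).trans lintegral_zero
  filter_upwards [h] with y hy
  exact hy.measure_zero μ

namespace MvPolynomial

theorem volume_setOf_eval_eq_zero : ∀ {n : ℕ} {p : MvPolynomial (Fin n) ℝ}, p ≠ 0 →
    volume {x | eval x p = 0} = 0
  | 0, p, hp => by
    obtain ⟨c, rfl⟩ := C_surjective (Fin 0) p
    have hc : c ≠ 0 := by rintro rfl; exact hp C_0
    simp [hc]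
  | n + 1, p, hp => by
    set q := finSuccEquiv ℝ n p
    have hq : q.leadingCoeff ≠ 0 := by simpa [q] using hp
    have fibers : ∀ᵐ s : Fin n → ℝ, {y | (q.map (eval s)).eval y = 0}.Finite := by
      filter_upwards [measure_eq_zero_iff_ae_notMem.mp (volume_setOf_eval_eq_zero hq)] with s hs
      refine Polynomial.finite_setOfPred_isRoot fun h => hs ?_
      simpa using congrArg (Polynomial.coeff · q.natDegree) h
    set e := MeasurableEquiv.piFinSuccAbove (fun _ : Fin (n + 1) => ℝ) 0
    have hZ : MeasurableSet {x : Fin (n + 1) → ℝ | eval x p = 0} :=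
      (continuous_eval p).measurable (measurableSet_singleton 0)
    rw [← ((volume_preserving_piFinSuccAbove (fun _ => ℝ) 0).symm _).measure_preimage
      hZ.nullMeasurableSet]
    refine Measure.measure_prod_null_of_ae_finite_fiber (hZ.preimage e.symm.measurable) ?_
    filter_upwards [fibers] with s hs
    convert hs using 3 with y
    simp [MeasurableEquiv.piFinSuccAbove, Fin.insertNthEquiv, eval_eq_eval_mv_eval', q]

end MvPolynomial

section PolynomialMaps

variable (R V A : Type*) [CommSemiring R] [AddCommMonoid V] [Module R V] [Semiring A]
  [Algebra R A]

def polynomialMaps : Subalgebra R (V → A) :=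
  Algebra.adjoin R (Set.range fun l : V →ₗ[R] A => ⇑l)

variable {R V A}

theorem linearMap_mem_polynomialMaps (l : V →ₗ[R] A) : ⇑l ∈ polynomialMaps R V A :=
  Algebra.subset_adjoin ⟨l, rfl⟩

theorem comp_linearMap_mem_polynomialMaps {W : Type*} [AddCommMonoid W] [Module R W]
    {f : V → A} (hf : f ∈ polynomialMaps R V A) (L : W →ₗ[R] V) :
    f ∘ L ∈ polynomialMaps R W A := by
  induction hf using Algebra.adjoin_induction with
  | mem _ hl =>
    obtain ⟨l, rfl⟩ := hl
    exact linearMap_mem_polynomialMaps (l ∘ₗ L)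
  | algebraMap r => exact algebraMap_mem _ r
  | add _ _ _ _ hf hg => exact add_mem hf hg
  | mul _ _ _ _ hf hg => exact mul_mem hf hg

theorem exists_mvPolynomial_of_mem_polynomialMaps {R σ : Type*} [CommSemiring R] [Fintype σ]
    {f : (σ → R) → R} (hf : f ∈ polynomialMaps R (σ → R) R) :
    ∃ p : MvPolynomial σ R, ∀ x, f x = MvPolynomial.eval x p := by
  classical
  induction hf using Algebra.adjoin_induction with
  | mem _ hl =>
    obtain ⟨l, rfl⟩ := hl
    refine ⟨∑ i, MvPolynomial.C (l fun j => if i = j then 1 else 0) * MvPolynomial.X i,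
      fun x => ?_⟩
    simp [l.pi_apply_eq_sum_univ x, mul_comm]
  | algebraMap r => exact ⟨MvPolynomial.C r, fun x => by simp⟩
  | add _ _ _ _ hf hg =>
    obtain ⟨p, hp⟩ := hf
    obtain ⟨q, hq⟩ := hg
    exact ⟨p + q, fun x => by simp [hp, hq]⟩
  | mul _ _ _ _ hf hg =>
    obtain ⟨p, hp⟩ := hf
    obtain ⟨q, hq⟩ := hg
    exact ⟨p * q, fun x => by simp [hp, hq]⟩

end PolynomialMaps

theorem re_mem_polynomialMaps_and_im_mem_polynomialMaps {V : Type*} [AddCommMonoid V]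
    [Module ℝ V] {g : V → ℂ} (hg : g ∈ polynomialMaps ℝ V ℂ) :
    (fun x => (g x).re) ∈ polynomialMaps ℝ V ℝ ∧ (fun x => (g x).im) ∈ polynomialMaps ℝ V ℝ := by
  induction hg using Algebra.adjoin_induction with
  | mem _ hl =>
    obtain ⟨l, rfl⟩ := hl
    exact ⟨linearMap_mem_polynomialMaps (Complex.reLm ∘ₗ l),
      linearMap_mem_polynomialMaps (Complex.imLm ∘ₗ l)⟩
  | algebraMap r => exact ⟨algebraMap_mem _ r, by simp; exact zero_mem _⟩
  | add _ _ _ _ hf hg => exact ⟨add_mem hf.1 hg.1, add_mem hf.2 hg.2⟩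
  | mul _ _ _ _ hf hg =>
    exact ⟨sub_mem (mul_mem hf.1 hg.1) (mul_mem hf.2 hg.2),
      add_mem (mul_mem hf.1 hg.2) (mul_mem hf.2 hg.1)⟩

theorem addHaar_setOf_apply_eq_zero {V : Type*} [AddCommGroup V] [Module ℝ V]
    [TopologicalSpace V] [IsTopologicalAddGroup V] [ContinuousSMul ℝ V] [T2Space V]
    [FiniteDimensional ℝ V] [MeasurableSpace V] [BorelSpace V] (μ : Measure V)
    [μ.IsAddHaarMeasure] {f : V → ℝ} (hf : f ∈ polynomialMaps ℝ V ℝ) (hf₀ : f ≠ 0) :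
    μ {x | f x = 0} = 0 := by
  set e := (Module.finBasis ℝ V).equivFun
  obtain ⟨p, hp⟩ := exists_mvPolynomial_of_mem_polynomialMaps
    (comp_linearMap_mem_polynomialMaps hf e.symm.toLinearMap)
  replace hp (x : V) : f x = MvPolynomial.eval (e x) p := by
    simpa using hp (e x)
  have hp₀ : p ≠ 0 := by
    rintro rfl
    exact hf₀ (funext fun x => by simpa using hp x)
  have hZ : MeasurableSet {y | MvPolynomial.eval y p = 0} :=
    (MvPolynomial.continuous_eval p).measurable (measurableSet_singleton 0)
  have he : Measurable e := (LinearMap.continuous_of_finiteDimensional e.toLinearMap).measurable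
  have hset : {x | f x = 0} = e ⁻¹' {y | MvPolynomial.eval y p = 0} := by
    ext x
    simp [hp]
  rw [hset, ← Measure.map_apply he hZ]
  exact Measure.absolutelyContinuous_isAddHaarMeasure _ volume
    (MvPolynomial.volume_setOf_eval_eq_zero hp₀)

@[simps]
def selfAdjoint.subtypeLinearMap (R A : Type*) [Semiring R] [StarMul R] [TrivialStar R]
    [AddCommGroup A] [Module R A] [StarAddMonoid A] [StarModule R A] : selfAdjoint A →ₗ[R] A where
  toFun := Subtype.val
  map_add' _ _ := rfl
  map_smul' _ _ := rfl

instance selfAdjoint.instFiniteDimensional {A : Type*} [AddCommGroup A] [Module ℝ A]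
    [StarAddMonoid A] [StarModule ℝ A] [FiniteDimensional ℝ A] :
    FiniteDimensional ℝ (selfAdjoint A) :=
  FiniteDimensional.of_injective (selfAdjoint.subtypeLinearMap ℝ A) Subtype.val_injective

instance selfAdjoint.instContinuousSMul {R A : Type*} [Semiring R] [StarMul R] [TrivialStar R]
    [AddCommGroup A] [Module R A] [StarAddMonoid A] [StarModule R A] [TopologicalSpace R]
    [TopologicalSpace A] [ContinuousSMul R A] : ContinuousSMul R (selfAdjoint A) :=
  ⟨continuous_induced_rng.2 (continuous_fst.smul (continuous_subtype_val.comp continuous_snd))⟩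

instance selfAdjoint.instSecondCountableTopology {A : Type*} [AddGroup A] [StarAddMonoid A]
    [TopologicalSpace A] [SecondCountableTopology A] : SecondCountableTopology (selfAdjoint A) :=
  TopologicalSpace.Subtype.secondCountableTopology _

instance Matrix.instSecondCountableTopology {m n R : Type*} [Countable m] [Countable n]
    [TopologicalSpace R] [SecondCountableTopology R] : SecondCountableTopology (Matrix m n R) :=
  inferInstanceAs (SecondCountableTopology (m → n → R))

section MatrixEntries

variable {X n α σ : Type*} [Fintype n] [Semiring α] [SetLike σ (X → α)]
  [SubsemiringClass σ (X → α)] {S : σ} {M N : X → Matrix n n α}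

theorem Matrix.entry_mul_mem (hM : ∀ i j, (fun x => M x i j) ∈ S)
    (hN : ∀ i j, (fun x => N x i j) ∈ S) (i j : n) : (fun x => (M x * N x) i j) ∈ S := by
  convert sum_mem (t := Finset.univ) fun k _ => mul_mem (hM i k) (hN k j) using 1
  ext x
  simp [mul_apply]

theorem Matrix.trace_mem (hM : ∀ i j, (fun x => M x i j) ∈ S) : (fun x => trace (M x)) ∈ S := by
  convert sum_mem (t := Finset.univ) fun i _ => hM i i using 1
  ext x
  simp [trace]

end MatrixEntries

section ImTraceWord

variable {n : Type*} [Fintype n]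

def imTraceWord (A B : Matrix n n ℂ) : ℝ := (trace (A * A * B * B * A * B)).im

theorem imTraceWord_comp_mem_polynomialMaps {V : Type*} [AddCommMonoid V] [Module ℝ V]
    (L₁ L₂ : V →ₗ[ℝ] Matrix n n ℂ) :
    (fun x => imTraceWord (L₁ x) (L₂ x)) ∈ polynomialMaps ℝ V ℝ := by
  have h₁ (i j : n) : (fun x => L₁ x i j) ∈ polynomialMaps ℝ V ℂ :=
    linearMap_mem_polynomialMaps (entryLinearMap ℝ ℂ i j ∘ₗ L₁)
  have h₂ (i j : n) : (fun x => L₂ x i j) ∈ polynomialMaps ℝ V ℂ :=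
    linearMap_mem_polynomialMaps (entryLinearMap ℝ ℂ i j ∘ₗ L₂)
  exact (re_mem_polynomialMaps_and_im_mem_polynomialMaps (trace_mem (entry_mul_mem
    (entry_mul_mem (entry_mul_mem (entry_mul_mem (entry_mul_mem h₁ h₁) h₂) h₂) h₁) h₂))).2

theorem im_trace_eq_zero_of_mem_range_ofReal [DecidableEq n] {M : Matrix n n ℂ}
    (hM : M ∈ (Complex.ofRealHom.mapMatrix : Matrix n n ℝ →+* Matrix n n ℂ).range) :
    (trace M).im = 0 := by
  obtain ⟨N, rfl⟩ := hM
  simp [← AddMonoidHom.map_trace]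

theorem IsStoquastic.mem_range_ofReal {d : ℕ} {M : Matrix (Fin d) (Fin d) ℂ}
    (hM : IsStoquastic M) :
    M ∈ (Complex.ofRealHom.mapMatrix : Matrix (Fin d) (Fin d) ℝ →+* _).range := by
  refine ⟨M.map Complex.re, ext fun i j => Complex.ext rfl ?_⟩
  obtain rfl | hij := eq_or_ne i j
  · simpa using (Complex.conj_eq_iff_im.mp (hM.1.apply i i)).symm
  · exact (hM.2 i j hij).1.symm

theorem imTraceWord_eq_zero_of_isStoquastic_conj {d : ℕ} {U : Matrix (Fin d) (Fin d) ℂ}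
    (hU : U ∈ unitaryGroup (Fin d) ℂ) {A B : Matrix (Fin d) (Fin d) ℂ}
    (hA : IsStoquastic (U * A * Uᴴ)) (hB : IsStoquastic (U * B * Uᴴ)) :
    imTraceWord A B = 0 := by
  set conj := Unitary.conjStarAlgAut ℂ _ ⟨U, hU⟩
  have hconj (X : Matrix (Fin d) (Fin d) ℂ) : conj X = U * X * Uᴴ := rfl
  have hreal := mul_mem (mul_mem (mul_mem (mul_mem (mul_mem hA.mem_range_ofReal
    hA.mem_range_ofReal) hB.mem_range_ofReal) hB.mem_range_ofReal) hA.mem_range_ofReal)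
    hB.mem_range_ofReal
  simp only [← hconj, ← map_mul] at hreal
  rw [imTraceWord, ← trace_map conj]
  exact im_trace_eq_zero_of_mem_range_ofReal hreal

end ImTraceWord

section ExtendByZero

variable {l m n α : Type*}

def Matrix.extendByZero [Zero α] (e : l ⊕ m ≃ n) (M : Matrix l l α) : Matrix n n α :=
  reindex e e (fromBlocks M 0 0 0)

variable (e : l ⊕ m ≃ n)

theorem Matrix.extendByZero_mul [Fintype l] [Fintype m] [Fintype n]
    [NonUnitalNonAssocSemiring α] (M N : Matrix l l α) :
    extendByZero e M * extendByZero e N = extendByZero e (M * N) := by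
  simp [extendByZero, submatrix_mul_equiv, fromBlocks_multiply]

theorem Matrix.trace_extendByZero [Fintype l] [Fintype m] [Fintype n] [AddCommMonoid α]
    (M : Matrix l l α) :
    trace (extendByZero e M) = trace M := by
  simp [extendByZero, trace, ← Equiv.sum_comp e, Fintype.sum_sum_type]

theorem Matrix.IsHermitian.extendByZero [AddMonoid α] [StarAddMonoid α] {M : Matrix l l α}
    (hM : M.IsHermitian) : (extendByZero e M).IsHermitian := by
  simp [Matrix.extendByZero, IsHermitian, fromBlocks_conjTranspose, hM.eq]

end ExtendByZero

def witnessA : Matrix (Fin 3) (Fin 3) ℂ := !![1, 0, 0; 0, 2, 0; 0, 0, 3]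

def witnessB : Matrix (Fin 3) (Fin 3) ℂ := !![0, 1, Complex.I; 1, 0, 1; -Complex.I, 1, 0]

theorem isHermitian_witnessA : witnessA.IsHermitian := by
  ext i j
  fin_cases i <;> fin_cases j <;> simp [witnessA]

theorem isHermitian_witnessB : witnessB.IsHermitian := by
  ext i j
  fin_cases i <;> fin_cases j <;> simp [witnessB]

theorem imTraceWord_witness : imTraceWord witnessA witnessB = -2 := by
  simp [imTraceWord, trace_fin_three, witnessA, witnessB]
  norm_num

theorem imTraceWord_extendByZero {l m n : Type*} [Fintype l] [Fintype m] [Fintype n]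
    (e : l ⊕ m ≃ n) (A B : Matrix l l ℂ) :
    imTraceWord (extendByZero e A) (extendByZero e B) = imTraceWord A B := by
  simp only [imTraceWord, extendByZero_mul, trace_extendByZero]

theorem exists_isHermitian_imTraceWord_ne_zero {d : ℕ} (hd : 3 ≤ d) :
    ∃ A B : Matrix (Fin d) (Fin d) ℂ, A.IsHermitian ∧ B.IsHermitian ∧ imTraceWord A B ≠ 0 := by
  set e : Fin 3 ⊕ Fin (d - 3) ≃ Fin d := finSumFinEquiv.trans (finCongr (by omega))
  refine ⟨extendByZero e witnessA, extendByZero e witnessB, isHermitian_witnessA.extendByZero e,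
    isHermitian_witnessB.extendByZero e, ?_⟩
  rw [imTraceWord_extendByZero, imTraceWord_witness]
  norm_num

theorem simStoquasticizable_measure_zero
    (d m : ℕ) (hd : 3 ≤ d) (hm : 2 ≤ m)
    [MeasurableSpace (selfAdjoint (Matrix (Fin d) (Fin d) ℂ))]
    [BorelSpace (selfAdjoint (Matrix (Fin d) (Fin d) ℂ))]
    (μ : Measure (Fin m → selfAdjoint (Matrix (Fin d) (Fin d) ℂ)))
    [μ.IsAddHaarMeasure] :
    μ {H : Fin m → selfAdjoint (Matrix (Fin d) (Fin d) ℂ) |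
        SimStoquasticizable (fun j => (H j : Matrix (Fin d) (Fin d) ℂ))} = 0 := by
  set i₀ : Fin m := ⟨0, by omega⟩
  set i₁ : Fin m := ⟨1, by omega⟩
  let L (i : Fin m) :
      (Fin m → selfAdjoint (Matrix (Fin d) (Fin d) ℂ)) →ₗ[ℝ] Matrix (Fin d) (Fin d) ℂ :=
    selfAdjoint.subtypeLinearMap ℝ _ ∘ₗ LinearMap.proj i
  have hsub : {H : Fin m → selfAdjoint (Matrix (Fin d) (Fin d) ℂ) |
      SimStoquasticizable (fun j => (H j : Matrix (Fin d) (Fin d) ℂ))} ⊆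
      {H | imTraceWord (L i₀ H) (L i₁ H) = 0} :=
    fun H ⟨U, hU, hH⟩ => imTraceWord_eq_zero_of_isStoquastic_conj hU (hH i₀) (hH i₁)
  refine measure_mono_null hsub (addHaar_setOf_apply_eq_zero μ
    (imTraceWord_comp_mem_polynomialMaps (L i₀) (L i₁)) fun h => ?_)
  obtain ⟨A, B, hA, hB, hAB⟩ := exists_isHermitian_imTraceWord_ne_zero hd
  have hi : i₁ ≠ i₀ := by simp [i₀, i₁, Fin.ext_iff]
  refine hAB ?_
  simpa [L, hi] using congrFun h fun j => if j = i₀ then ⟨A, hA⟩ else ⟨B, hB⟩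
end

section
/- For any two Hermitian 2×2 complex matrices H₁ and H₂, there exists a unitary 2×2 matrix U such that U H₁ U† and U H₂ U† are both stoquastic; that is, every pair of Hermitian 2×2 matrices is simultaneously stoquasticizable. -/
open Matrix

/-!
Diagonalize `H₁` by a unitary `W`. Conjugating further by a diagonal unitary `diag(1, u)` keeps
`W H₁ W†` diagonal and multiplies the off-diagonal entry `b` of `W H₂ W†` by `conj u`; the
phase `u = -exp (i arg b)` turns it into `-‖b‖ ≤ 0`, and the other off-diagonal entry follows
by hermiticity.
-/

namespace Matrix

variable {n α : Type*} [Fintype n] [DecidableEq n]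

theorem diagonal_mem_unitaryGroup [CommRing α] [StarRing α] {v : n → α}
    (hv : ∀ i, v i * star (v i) = 1) : diagonal v ∈ unitaryGroup n α := by
  rw [mem_unitaryGroup_iff, star_eq_conjTranspose, diagonal_conjTranspose,
    diagonal_mul_diagonal, ← diagonal_one]
  exact congrArg diagonal (funext hv)

theorem diagonal_mul_mul_conjTranspose_diagonal_apply [CommRing α] [StarRing α] (v : n → α)
    (A : Matrix n n α) (i j : n) :
    (diagonal v * A * (diagonal v)ᴴ) i j = v i * A i j * star (v j) := by
  rw [diagonal_conjTranspose, mul_diagonal, diagonal_mul]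
  rfl

theorem IsDiag.diagonal_mul_mul_conjTranspose_diagonal [CommRing α] [StarRing α]
    {A : Matrix n n α} (hA : A.IsDiag) (v : n → α) :
    (diagonal v * A * (diagonal v)ᴴ).IsDiag := by
  intro i j hij
  rw [diagonal_mul_mul_conjTranspose_diagonal_apply, hA hij, mul_zero, zero_mul]

theorem IsHermitian.exists_mem_unitaryGroup_isDiag_conj {𝕜 : Type*} [RCLike 𝕜]
    {A : Matrix n n 𝕜} (hA : A.IsHermitian) :
    ∃ U ∈ unitaryGroup n 𝕜, (U * A * Uᴴ).IsDiag := by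
  refine ⟨star hA.eigenvectorUnitary, (star hA.eigenvectorUnitary).2, ?_⟩
  have hdiag := hA.conjStarAlgAut_star_eigenvectorUnitary
  rw [Unitary.conjStarAlgAut_star_apply] at hdiag
  rw [← star_eq_conjTranspose, star_star, hdiag]
  exact isDiag_diagonal _

end Matrix

theorem Complex.exists_mul_star_self_eq_one_and_mul_star_eq_neg_norm (b : ℂ) :
    ∃ u : ℂ, u * star u = 1 ∧ b * star u = -‖b‖ := by
  set z := exp (arg b * I) with hz
  have hstar : z * star z = 1 := by
    rw [show star z = exp (-(arg b * I)) by rw [hz, star_def, ← exp_conj]; simp,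
      ← exp_add, add_neg_cancel, exp_zero]
  refine ⟨-z, by rwa [star_neg, neg_mul_neg], ?_⟩
  calc b * star (-z) = -(‖b‖ * (z * star z)) := by
        rw [star_neg, mul_neg, ← mul_assoc, hz, norm_mul_exp_arg_mul_I]
    _ = -‖b‖ := by rw [hstar, mul_one]

theorem Matrix.IsDiag.isStoquastic {d : ℕ} {H : Matrix (Fin d) (Fin d) ℂ}
    (hH : H.IsHermitian) (hd : H.IsDiag) : IsStoquastic H :=
  ⟨hH, fun _ _ hjk => by simp [hd hjk]⟩

theorem isStoquastic_of_fin_two {H : Matrix (Fin 2) (Fin 2) ℂ} (hH : H.IsHermitian)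
    (him : (H 0 1).im = 0) (hre : (H 0 1).re ≤ 0) : IsStoquastic H := by
  refine ⟨hH, fun j k hjk => ?_⟩
  have h10 : H 1 0 = star (H 0 1) := (hH.apply 1 0).symm
  fin_cases j <;> fin_cases k <;> simp_all

theorem Matrix.IsHermitian.exists_diagonal_conj_isStoquastic {H : Matrix (Fin 2) (Fin 2) ℂ}
    (hH : H.IsHermitian) :
    ∃ v : Fin 2 → ℂ, (∀ i, v i * star (v i) = 1) ∧
      IsStoquastic (diagonal v * H * (diagonal v)ᴴ) := by
  obtain ⟨u, hu, hb⟩ := Complex.exists_mul_star_self_eq_one_and_mul_star_eq_neg_norm (H 0 1)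
  have hv : ∀ i, ![1, u] i * star (![1, u] i) = 1 := by
    intro i
    fin_cases i
    · simp
    · exact hu
  have hentry : (diagonal ![1, u] * H * (diagonal ![1, u])ᴴ) 0 1 = -‖H 0 1‖ := by
    rw [diagonal_mul_mul_conjTranspose_diagonal_apply]
    simpa using hb
  refine ⟨![1, u], hv,
    isStoquastic_of_fin_two (isHermitian_mul_mul_conjTranspose _ hH) ?_ ?_⟩ <;>
    rw [hentry] <;> simp

theorem two_by_two_pairs_simStoquasticizable
    (H₁ H₂ : Matrix (Fin 2) (Fin 2) ℂ)
    (h₁ : H₁.IsHermitian) (h₂ : H₂.IsHermitian) :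
    ∃ U ∈ Matrix.unitaryGroup (Fin 2) ℂ,
      IsStoquastic (U * H₁ * Uᴴ) ∧ IsStoquastic (U * H₂ * Uᴴ) := by
  obtain ⟨W, hW, hdiag⟩ := h₁.exists_mem_unitaryGroup_isDiag_conj
  obtain ⟨v, hv, hstoq⟩ :=
    (isHermitian_mul_mul_conjTranspose W h₂).exists_diagonal_conj_isStoquastic
  have hconj : ∀ H : Matrix (Fin 2) (Fin 2) ℂ,
      diagonal v * W * H * (diagonal v * W)ᴴ = diagonal v * (W * H * Wᴴ) * (diagonal v)ᴴ := by
    intro H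
    simp only [conjTranspose_mul, Matrix.mul_assoc]
  refine ⟨diagonal v * W, mul_mem (diagonal_mem_unitaryGroup hv) hW, ?_, ?_⟩
  · rw [hconj]
    exact (hdiag.diagonal_mul_mul_conjTranspose_diagonal v).isStoquastic
      (isHermitian_mul_mul_conjTranspose _ (isHermitian_mul_mul_conjTranspose W h₁))
  · rw [hconj]
    exact hstoq
end
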